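/- arXiv:2109.00292 — 7 statements merged into one kernel-verified Lean document; each statement's English description precedes it below -/
import Mathlib

section
/- Let m ≥ 1 and let F = 𝔽_{2^m} be the finite field with 2^m elements. Then the set S = {(x, x³) : x ∈ F} is a Sidon set in the additive group F × F. That is, whenever (a,a³) + (b,b³) = (c,c³) + (d,d³) with a ≠ b and c ≠ d, the unordered pairs {a,b} and {c,d} coincide. -/
/-- For `m ≥ 1` and `F = 𝔽_{2^m}`, the set `{(x, x³) : x ∈ F}` is a Sidon set
in the additive group `F × F`: whenever `(a,a³) + (b,b³) = (c,c³) + (d,d³)` with `a ≠ b` and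
`c ≠ d`, the unordered pairs `{a,b}` and `{c,d}` coincide. -/
theorem sidon_graph_of_cube (m : ℕ) (hm : 1 ≤ m)
    (a b c d : GaloisField 2 m) (hab : a ≠ b) (hcd : c ≠ d)
    (h : ((a, a ^ 3) : GaloisField 2 m × GaloisField 2 m) + (b, b ^ 3)
        = (c, c ^ 3) + (d, d ^ 3)) :
    ({a, b} : Set (GaloisField 2 m)) = {c, d} := by
  rw [Prod.mk_add_mk, Prod.mk_add_mk, Prod.mk.injEq] at h
  obtain ⟨h1, h2⟩ := h
  have htwo : (2 : GaloisField 2 m) = 0 := by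
    have := CharP.cast_eq_zero (GaloisField 2 m) 2
    exact_mod_cast this
  have hs : c + d ≠ 0 := by
    intro hz
    exact hcd (by rw [eq_neg_of_add_eq_zero_left hz, CharTwo.neg_eq])
  have key : (c + d) * (a * b) = (c + d) * (c * d) := by
    linear_combination (a ^ 2 + a * b + b ^ 2 + (a + b) * (c + d) + (c + d) ^ 2 + a * b - a * b) * h1
      - h2 - (a ^ 2 * b + a * b ^ 2 - c ^ 2 * d - c * d ^ 2) * htwo
  have hp : a * b = c * d := mul_left_cancel₀ hs key
  have hq : (c - a) * (c - b) = 0 := by linear_combination (-c) * h1 + hp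
  rcases mul_eq_zero.mp hq with hca | hcb
  · have hca : c = a := sub_eq_zero.mp hca
    subst hca
    have : b = d := by linear_combination h1
    subst this
    rfl
  · have hcb : c = b := sub_eq_zero.mp hcb
    subst hcb
    have : a = d := by linear_combination h1
    subst this
    exact Set.pair_comm a c
end

section
/- Let n ≥ 1, let F = 𝔽_{2^n}, and let x, y ∈ F with y ≠ x³. Then the number of unordered triples {a, b, c} of pairwise distinct elements of F satisfying a + b + c = x and a³ + b³ + c³ = y is at least (2^n − 2·√(2^n) − 2)/6. -/
/-!
The hypothesis `y ≠ x³` forces every solution `(a, b, c)` of `a + b + c = x`, `a³ + b³ + c³ = y` to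
have pairwise distinct entries and `a + b ≠ 0`. With `v = 1/(a + b)` and `t = a/(a + b)` the
equations become `t² + t = c v³ + (x v)² + x v`, where `c = y + x³`; this Artin–Schreier equation
has two solutions `t` when `Tr (c v³) = 0` and none otherwise. So six times the number of triples
is `2 · #{v ≠ 0 | Tr (c v³) = 0} = q + S - 2`, where `S = ∑ᵥ (-1)^Tr (c v³)` and `q = |F|`.
Writing `S²` as a double sum and substituting `w = v + h`, the inner sum over `v` becomes a
character sum of the additive map `v ↦ Tr (c h v² + c h² v)`, which vanishes unless this map is
zero, that is unless `h = 0` or `c h³ = 1`. There are at most four such `h`, so `S² ≤ 4q`.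
-/

open Finset

def signChar : AddChar (ZMod 2) ℤ := AddChar.zmodChar 2 (neg_one_sq (R := ℤ))

lemma signChar_apply (s : ZMod 2) : signChar s = if s = 0 then 1 else -1 := by
  fin_cases s <;> rfl

lemma signChar_injective : Function.Injective signChar := by
  decide

lemma signChar_le_one (s : ZMod 2) : signChar s ≤ 1 := by
  fin_cases s <;> decide

lemma sum_signChar_comp_eq_zero {G : Type*} [AddCommGroup G] [Fintype G]
    {φ : G →+ ZMod 2} (hφ : φ ≠ 0) : ∑ g, signChar (φ g) = 0 :=
  AddChar.sum_eq_zero_iff_ne_zero.mpr fun h ↦ hφ <|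
    AddChar.compAddMonoidHom_injective_right _ signChar_injective (h.trans rfl)

lemma sum_signChar_eq {α : Type*} [Fintype α] (f : α → ZMod 2) :
    ∑ a, signChar (f a) = 2 * #{a | f a = 0} - Fintype.card α := by
  rw [← card_univ, ← card_filter_add_card_filter_not (s := univ) (fun a ↦ f a = 0)]
  simp only [signChar_apply, sum_ite, sum_const, nsmul_eq_mul]
  push_cast
  ring

section Triples

variable {α : Type*} [DecidableEq α] [Fintype α]

lemma card_filter_distinct_triple_eq_six {s : Finset α} (hs : s.card = 3) :
    #{p : α × α × α | p.1 ≠ p.2.1 ∧ p.1 ≠ p.2.2 ∧ p.2.1 ≠ p.2.2 ∧ {p.1, p.2.1, p.2.2} = s} = 6 := by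
  obtain ⟨a, b, c, hab, hac, hbc, rfl⟩ := card_eq_three.mp hs
  have : ({p : α × α × α | p.1 ≠ p.2.1 ∧ p.1 ≠ p.2.2 ∧ p.2.1 ≠ p.2.2 ∧
      ({p.1, p.2.1, p.2.2} : Finset α) = {a, b, c}} : Finset _)
      = {(a, b, c), (a, c, b), (b, a, c), (b, c, a), (c, a, b), (c, b, a)} := by
    ext ⟨p, q, r⟩
    simp only [mem_filter, mem_univ, true_and, mem_insert, mem_singleton, Prod.mk.injEq,
      Finset.ext_iff]
    constructor
    · rintro ⟨_, _, _, h⟩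
      have := h p; have := h q; have := h r
      grind
    · rintro (h | h | h | h | h | h) <;> grind
  rw [this]
  simp [hab, hac, hbc, hab.symm, hac.symm, hbc.symm]

lemma six_mul_card_filter_card_eq_three (P : Finset α → Prop) [DecidablePred P] :
    6 * #{s : Finset α | s.card = 3 ∧ P s} =
      #{p : α × α × α | p.1 ≠ p.2.1 ∧ p.1 ≠ p.2.2 ∧ p.2.1 ≠ p.2.2 ∧ P {p.1, p.2.1, p.2.2}} := by
  rw [card_eq_sum_card_fiberwise (f := fun p : α × α × α ↦ ({p.1, p.2.1, p.2.2} : Finset α))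
    (t := {s : Finset α | s.card = 3 ∧ P s})]
  · rw [mul_comm, ← smul_eq_mul, ← sum_const]
    refine sum_congr rfl fun s hs ↦ ?_
    obtain ⟨hs3, hPs⟩ := (mem_filter.mp hs).2
    rw [filter_filter, ← card_filter_distinct_triple_eq_six hs3]
    congr 1
    ext p
    simp only [mem_filter, mem_univ, true_and]
    exact ⟨fun ⟨h₁, h₂, h₃, h⟩ ↦ ⟨⟨h₁, h₂, h₃, h ▸ hPs⟩, h⟩,
      fun ⟨⟨h₁, h₂, h₃, _⟩, h⟩ ↦ ⟨h₁, h₂, h₃, h⟩⟩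
  · rintro ⟨a, b, c⟩ hp
    simp only [coe_filter, mem_univ, true_and, Set.mem_ofPred_eq] at hp ⊢
    obtain ⟨hab, hac, hbc, hP⟩ := hp
    exact ⟨card_eq_three.mpr ⟨a, b, c, hab, hac, hbc, rfl⟩, hP⟩

end Triples

lemma ne_and_ne_and_ne_of_ne_cube {R : Type*} [CommRing R] [CharP R 2] {x y a b c : R}
    (hxy : y ≠ x ^ 3) (hsum : a + b + c = x) (hcube : a ^ 3 + b ^ 3 + c ^ 3 = y) :
    a ≠ b ∧ a ≠ c ∧ b ≠ c := by
  refine ⟨?_, ?_, ?_⟩ <;> rintro rfl <;> apply hxy <;> grind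

lemma card_filter_eq_zero_or_mul_cube_eq_one_le {K : Type*} [Field K] [Fintype K] [DecidableEq K]
    (c : K) : #{h | h = 0 ∨ c * h ^ 3 = 1} ≤ 4 :=
  calc #{h | h = 0 ∨ c * h ^ 3 = 1}
      ≤ #(insert 0 (Polynomial.nthRoots 3 c⁻¹).toFinset) := by
        refine card_le_card fun h hh ↦ ?_
        simp only [mem_filter, mem_univ, true_and] at hh
        rw [mem_insert, Multiset.mem_toFinset, Polynomial.mem_nthRoots (by norm_num)]
        exact hh.imp_right eq_inv_of_mul_eq_one_right
    _ ≤ Multiset.card (Polynomial.nthRoots 3 c⁻¹) + 1 :=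
        (card_insert_le _ _).trans (Nat.add_le_add_right (Multiset.toFinset_card_le _) 1)
    _ ≤ 4 := Nat.add_le_add_right (Polynomial.card_nthRoots 3 c⁻¹) 1

section FiniteFieldCharTwo

variable {F : Type*} [Field F] [Fintype F] [Algebra (ZMod 2) F]

local notation "Tr" => Algebra.trace (ZMod 2) F

instance charP_two_of_algebra_zmod_two : CharP F 2 :=
  charP_of_injective_algebraMap (algebraMap (ZMod 2) F).injective 2

lemma trace_sq (z : F) : Tr (z ^ 2) = Tr z := by
  simpa [ZMod.card] using
    Algebra.trace_eq_of_algEquiv (FiniteField.frobeniusAlgEquivOfAlgebraic (ZMod 2) F) z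

lemma trace_sq_add_self (z : F) : Tr (z ^ 2 + z) = 0 := by
  rw [map_add, trace_sq, CharTwo.add_self_eq_zero]

lemma exists_trace_mul_ne_zero {d : F} (hd : d ≠ 0) : ∃ b, Tr (d * b) ≠ 0 := by
  obtain ⟨z, hz⟩ : ∃ z, Tr z ≠ 0 := by
    by_contra! h
    exact Algebra.trace_ne_zero (ZMod 2) F (LinearMap.ext h)
  exact ⟨d⁻¹ * z, by rwa [mul_inv_cancel_left₀ hd]⟩

lemma two_mul_card_filter_trace_mul_eq_zero {d : F} (hd : d ≠ 0) :
    2 * #{v | Tr (d * v) = 0} = Fintype.card F := by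
  obtain ⟨b, hb⟩ := exists_trace_mul_ne_zero hd
  let φ : F →+ ZMod 2 := (Tr).toAddMonoidHom.comp (AddMonoidHom.mulLeft d)
  have hφ : φ ≠ 0 := fun h ↦ hb (DFunLike.congr_fun h b)
  have := sum_signChar_comp_eq_zero hφ
  rw [sum_signChar_eq] at this
  change 2 * ((#{v | Tr (d * v) = 0} : ℕ) : ℤ) - _ = 0 at this
  omega

lemma eq_sq_of_forall_trace_eq_zero {a b : F} (h : ∀ v, Tr (a * v ^ 2 + b * v) = 0) :
    a = b ^ 2 := by
  obtain ⟨s, rfl⟩ : ∃ s, a = s ^ 2 := by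
    obtain ⟨s, hs⟩ := FiniteField.isSquare_of_char_two (ringChar.eq F 2) a
    exact ⟨s, hs.trans (sq s).symm⟩
  have hsb : s + b = 0 := by
    by_contra hne
    obtain ⟨v, hv⟩ := exists_trace_mul_ne_zero hne
    apply hv
    rw [add_mul, map_add, ← trace_sq (s * v), ← map_add, mul_pow]
    exact h v
  grind

lemma sq_sum_signChar_trace_mul_cube (c : F) :
    (∑ v, signChar (Tr (c * v ^ 3))) ^ 2 =
      ∑ h, signChar (Tr (c * h ^ 3)) * ∑ v, signChar (Tr (c * h * v ^ 2 + c * h ^ 2 * v)) := by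
  have shift (v : F) : ∑ w, signChar (Tr (c * v ^ 3)) * signChar (Tr (c * w ^ 3)) =
      ∑ h, signChar (Tr (c * h ^ 3)) * signChar (Tr (c * h * v ^ 2 + c * h ^ 2 * v)) := by
    rw [← Equiv.sum_comp (Equiv.addLeft v)]
    refine sum_congr rfl fun h _ ↦ ?_
    simp only [Equiv.coe_addLeft, ← AddChar.map_add_eq_mul, ← map_add]
    congr 2
    grind
  rw [sq, sum_mul_sum, sum_congr rfl fun v _ ↦ shift v, sum_comm]
  simp only [mul_sum]

variable [DecidableEq F]

lemma filter_sq_add_self_eq {s b₀ : F} (hb₀ : b₀ ^ 2 + b₀ = s) :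
    ({b | b ^ 2 + b = s} : Finset F) = {b₀, b₀ + 1} := by
  ext b
  simp only [mem_filter, mem_univ, true_and, mem_insert, mem_singleton]
  have : b ^ 2 + b + s = (b + b₀) * (b + b₀ + 1) := by grind
  grind

lemma card_filter_sq_add_self_eq (s : F) :
    #{b | b ^ 2 + b = s} = if Tr s = 0 then 2 else 0 := by
  have hfiber {r b₀ : F} (hb₀ : b₀ ^ 2 + b₀ = r) : #{b | b ^ 2 + b = r} = 2 := by
    rw [filter_sq_add_self_eq hb₀, card_pair (by simp)]
  set I := univ.image fun b : F ↦ b ^ 2 + b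
  have hIK : I = ({s | Tr s = 0} : Finset F) := by
    refine eq_of_subset_of_card_le (fun r hr ↦ ?_) ?_
    · obtain ⟨b, -, rfl⟩ := mem_image.mp hr
      simpa using trace_sq_add_self b
    · have hI : Fintype.card F = 2 * #I := by
        rw [← card_univ, card_eq_sum_card_fiberwise fun b _ ↦
          mem_image_of_mem (fun b : F ↦ b ^ 2 + b) (mem_univ b), mul_comm, ← smul_eq_mul,
          ← sum_const]
        refine sum_congr rfl fun r hr ↦ ?_
        obtain ⟨b₀, -, hb₀⟩ := mem_image.mp hr
        exact hfiber hb₀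
      have hK := two_mul_card_filter_trace_mul_eq_zero (one_ne_zero (α := F))
      simp only [one_mul] at hK
      omega
  split_ifs with hs
  · obtain ⟨b₀, -, hb₀⟩ := mem_image.mp (hIK ▸ mem_filter.mpr ⟨mem_univ s, hs⟩ : s ∈ I)
    exact hfiber hb₀
  · refine card_eq_zero.mpr (filter_eq_empty_iff.mpr fun b _ hb ↦ hs ?_)
    rw [← hb, trace_sq_add_self]

lemma card_filter_prod_sq_add_self_eq (P : F → Prop) [DecidablePred P] (r : F → F) :
    #{q : F × F | P q.1 ∧ q.2 ^ 2 + q.2 = r q.1} = 2 * #{v | P v ∧ Tr (r v) = 0} := by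
  simp only [card_filter, Fintype.sum_prod_type, mul_sum]
  refine sum_congr rfl fun v _ ↦ ?_
  by_cases hv : P v
  · simp only [hv, true_and, ← card_filter, card_filter_sq_add_self_eq]
    split_ifs <;> rfl
  · simp [hv]

lemma card_ordered_cover_triples_eq_card_param {x y : F} (hxy : y ≠ x ^ 3) :
    #{p : F × F × F | p.1 + p.2.1 + p.2.2 = x ∧ p.1 ^ 3 + p.2.1 ^ 3 + p.2.2 ^ 3 = y} =
      #{q : F × F | q.1 ≠ 0 ∧ q.2 ^ 2 + q.2 = (y + x ^ 3) * q.1 ^ 3 + (x * q.1) ^ 2 + x * q.1} := by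
  refine card_bij' (fun p _ ↦ ((p.1 + p.2.1)⁻¹, p.1 / (p.1 + p.2.1)))
    (fun q _ ↦ (q.2 / q.1, (q.2 + 1) / q.1, x + q.1⁻¹)) ?_ ?_ ?_ ?_
  · rintro ⟨a, b, c⟩ hp
    simp only [mem_filter, mem_univ, true_and] at hp ⊢
    have hab : a + b ≠ 0 := fun h ↦ hxy (by grind)
    grind
  · rintro ⟨v, t⟩ hq
    simp only [mem_filter, mem_univ, true_and] at hq ⊢
    grind
  · rintro ⟨a, b, c⟩ hp
    simp only [mem_filter, mem_univ, true_and] at hp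
    have hab : a + b ≠ 0 := fun h ↦ hxy (by grind)
    grind
  · rintro ⟨v, t⟩ hq
    simp only [mem_filter, mem_univ, true_and] at hq
    grind

lemma card_ordered_cover_triples {x y : F} (hxy : y ≠ x ^ 3) :
    #{p : F × F × F | p.1 + p.2.1 + p.2.2 = x ∧ p.1 ^ 3 + p.2.1 ^ 3 + p.2.2 ^ 3 = y} =
      2 * #{v | v ≠ 0 ∧ Tr ((y + x ^ 3) * v ^ 3) = 0} := by
  rw [card_ordered_cover_triples_eq_card_param hxy, card_filter_prod_sq_add_self_eq (· ≠ (0 : F))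
    fun v ↦ (y + x ^ 3) * v ^ 3 + (x * v) ^ 2 + x * v]
  have (v : F) : Tr ((y + x ^ 3) * v ^ 3 + (x * v) ^ 2 + x * v) = Tr ((y + x ^ 3) * v ^ 3) := by
    rw [add_assoc, map_add, trace_sq_add_self, add_zero]
  simp only [this]

lemma six_mul_card_cover_triples {x y : F} (hxy : y ≠ x ^ 3) :
    6 * #{s : Finset F | s.card = 3 ∧ ∑ t ∈ s, t = x ∧ ∑ t ∈ s, t ^ 3 = y} =
      2 * #{v | v ≠ 0 ∧ Tr ((y + x ^ 3) * v ^ 3) = 0} := by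
  rw [six_mul_card_filter_card_eq_three, ← card_ordered_cover_triples hxy]
  congr 1
  refine filter_congr fun ⟨a, b, c⟩ _ ↦ ?_
  have sum_triple {a b c : F} (hab : a ≠ b) (hac : a ≠ c) (hbc : b ≠ c) (f : F → F) :
      ∑ t ∈ {a, b, c}, f t = f a + f b + f c := by
    rw [sum_insert (by simp [hab, hac]), sum_pair hbc, add_assoc]
  constructor
  · rintro ⟨hab, hac, hbc, hsum, hcube⟩
    rw [sum_triple hab hac hbc] at hsum hcube
    exact ⟨hsum, hcube⟩
  · rintro ⟨hsum, hcube⟩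
    obtain ⟨hab, hac, hbc⟩ := ne_and_ne_and_ne_of_ne_cube hxy hsum hcube
    simp only [sum_triple hab hac hbc]
    exact ⟨hab, hac, hbc, hsum, hcube⟩

lemma signChar_trace_mul_cube_mul_sum_le {c : F} (hc : c ≠ 0) (h : F) :
    signChar (Tr (c * h ^ 3)) * ∑ v, signChar (Tr (c * h * v ^ 2 + c * h ^ 2 * v)) ≤
      if h = 0 ∨ c * h ^ 3 = 1 then (Fintype.card F : ℤ) else 0 := by
  let φ : F →+ ZMod 2 := AddMonoidHom.mk' (fun v ↦ Tr (c * h * v ^ 2 + c * h ^ 2 * v))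
    fun v w ↦ by rw [← map_add]; congr 1; grind
  by_cases hφ : φ = 0
  · have hzero (v : F) : Tr (c * h * v ^ 2 + c * h ^ 2 * v) = 0 := DFunLike.congr_fun hφ v
    have hh : h = 0 ∨ c * h ^ 3 = 1 := by
      by_cases h0 : h = 0
      · exact Or.inl h0
      · have := eq_sq_of_forall_trace_eq_zero hzero
        right
        grind
    simp only [hzero, AddChar.map_zero_eq_one, sum_const, card_univ, nsmul_eq_mul, mul_one,
      if_pos hh]
    exact mul_le_of_le_one_left (Nat.cast_nonneg _) (signChar_le_one _)
  · rw [show ∑ v, signChar (Tr (c * h * v ^ 2 + c * h ^ 2 * v)) = 0 from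
      sum_signChar_comp_eq_zero hφ, mul_zero]
    split_ifs <;> positivity

lemma sq_sum_signChar_trace_mul_cube_le {c : F} (hc : c ≠ 0) :
    (∑ v, signChar (Tr (c * v ^ 3))) ^ 2 ≤ 4 * Fintype.card F :=
  calc (∑ v, signChar (Tr (c * v ^ 3))) ^ 2
      ≤ ∑ h : F, if h = 0 ∨ c * h ^ 3 = 1 then (Fintype.card F : ℤ) else 0 := by
        rw [sq_sum_signChar_trace_mul_cube]
        exact sum_le_sum fun h _ ↦ signChar_trace_mul_cube_mul_sum_le hc h
    _ = #{h | h = 0 ∨ c * h ^ 3 = 1} * Fintype.card F := by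
        rw [sum_ite, sum_const_zero, sum_const, nsmul_eq_mul, add_zero]
    _ ≤ 4 * Fintype.card F := by
        gcongr
        exact_mod_cast card_filter_eq_zero_or_mul_cube_eq_one_le c

lemma card_filter_trace_mul_cube_eq_zero_ge {c : F} (hc : c ≠ 0) :
    (Fintype.card F : ℝ) - 2 * √(Fintype.card F) ≤ 2 * #{v | Tr (c * v ^ 3) = 0} := by
  have hS : ((2 * #{v | Tr (c * v ^ 3) = 0} - Fintype.card F : ℤ) : ℝ) ^ 2 ≤
      4 * Fintype.card F := by
    rw [← sum_signChar_eq fun v ↦ Tr (c * v ^ 3)]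
    exact_mod_cast sq_sum_signChar_trace_mul_cube_le hc
  push_cast at hS
  nlinarith [Real.sqrt_nonneg (Fintype.card F),
    Real.sq_sqrt (Nat.cast_nonneg (α := ℝ) (Fintype.card F))]

theorem le_ncard_cover_triples {x y : F} (hxy : y ≠ x ^ 3) :
    ((Fintype.card F : ℝ) - 2 * √(Fintype.card F) - 2) / 6 ≤
      ({s : Finset F | s.card = 3 ∧ (∑ t ∈ s, t) = x ∧ (∑ t ∈ s, t ^ 3) = y} : Set _).ncard := by
  have h6 := six_mul_card_cover_triples hxy
  set c := y + x ^ 3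
  have hc : c ≠ 0 := fun h ↦ hxy (by grind)
  have hzero : #{v | Tr (c * v ^ 3) = 0} = #{v | v ≠ 0 ∧ Tr (c * v ^ 3) = 0} + 1 := by
    rw [← card_insert_of_notMem (s := {v | v ≠ 0 ∧ Tr (c * v ^ 3) = 0}) (a := 0) (by simp)]
    congr 1
    ext v
    by_cases hv : v = 0 <;> simp [hv]
  have hset : {s : Finset F | s.card = 3 ∧ (∑ t ∈ s, t) = x ∧ (∑ t ∈ s, t ^ 3) = y} =
      ↑({s | s.card = 3 ∧ (∑ t ∈ s, t) = x ∧ (∑ t ∈ s, t ^ 3) = y} : Finset (Finset F)) := by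
    ext; simp
  have hN := card_filter_trace_mul_cube_eq_zero_ge hc
  rw [hzero] at hN
  rw [hset, Set.ncard_coe_finset, div_le_iff₀ (by norm_num)]
  have h6R := congrArg (Nat.cast : ℕ → ℝ) h6
  push_cast at h6R hN
  linarith

end FiniteFieldCharTwo

/-- For `n ≥ 1`, `F = 𝔽_{2^n}`, and `x y : F` with `y ≠ x³`, the number of
unordered triples `{a,b,c}` of pairwise distinct elements of `F` (i.e. 3-element finsets)
with `a + b + c = x` and `a³ + b³ + c³ = y` is at least `(2^n − 2√(2^n) − 2)/6`. -/
theorem count_cover_triples (n : ℕ) (hn : 1 ≤ n) (x y : GaloisField 2 n) (hxy : y ≠ x ^ 3) :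
    ((2 : ℝ) ^ n - 2 * Real.sqrt ((2 : ℝ) ^ n) - 2) / 6 ≤
      ({s : Finset (GaloisField 2 n) |
          s.card = 3 ∧ (∑ t ∈ s, t) = x ∧ (∑ t ∈ s, t ^ 3) = y} : Set _).ncard := by
  classical
  let := Fintype.ofFinite (GaloisField 2 n)
  have hq : (Fintype.card (GaloisField 2 n) : ℝ) = 2 ^ n := by
    rw [← Nat.card_eq_fintype_card, GaloisField.card 2 n (by omega)]
    push_cast
    rfl
  rw [← hq]
  exact le_ncard_cover_triples hxy
end

section
/- Let n ≥ 1, let F = 𝔽_{2^n}, and let x, y ∈ F with y ≠ x³. Then the number of ordered pairs (a, b) ∈ F × F satisfying a³ + b³ + (x + a + b)³ = y is at least 2^n − 2·√(2^n) − 2. -/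
/-!
Put `s = a + b` and `a = z s`. In characteristic two the equation has no solution with `s = 0`,
and for `s ≠ 0` it becomes the Artin–Schreier equation `z² + z = (y + x³)/s³ + (x/s)² + x/s`.
The image of `z ↦ z² + z` is a subgroup of index two, so `z² + z = w` has `1 + ψ(w)` solutions,
where `ψ = ±1` is the additive character with that kernel; as `ψ = 1` on the image, the terms in
`x/s` drop out. Summing over `s` and substituting `t = 1/s` gives `q - 2 + S(y + x³)` solutions,
where `q = 2ⁿ` and `S(d) = ∑ₜ ψ(d t³)`.

For `d ≠ 0` there is an elementary Weil bound `|S(d)| ≤ (g - 1)√q` with `g = gcd(q - 1, 3)`.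
`S` is constant on the coset `d (F^×)³`, which has `(q - 1)/g` elements, and orthogonality gives
`∑_d S(d) = q` and `∑_d S(d)² = q (1 + (q - 1) g)`. Cauchy–Schwarz for `S` on the nonzero `d`
outside that coset then bounds `S(d)`.
-/

open Finset

namespace AddSubgroup

variable {G : Type*} [AddGroup G] (H : AddSubgroup G) (hH : H.index = 2)

open Classical in
noncomputable def indexTwoChar : AddChar G ℝ where
  toFun u := if u ∈ H then 1 else -1
  map_zero_eq_one' := if_pos H.zero_mem
  map_add_eq_mul' a b := by
    by_cases ha : a ∈ H <;> by_cases hb : b ∈ H <;> simp [add_mem_iff_of_index_two hH, ha, hb]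

variable {H} {u : G}

theorem indexTwoChar_of_mem (hu : u ∈ H) : H.indexTwoChar hH u = 1 := if_pos hu

theorem indexTwoChar_of_notMem (hu : u ∉ H) : H.indexTwoChar hH u = -1 := if_neg hu

end AddSubgroup

namespace CharTwo

variable (R : Type*) [CommRing R] [CharP R 2]

def artinSchreier : R →+ R where
  toFun z := z ^ 2 + z
  map_zero' := by simp
  map_add' x y := by rw [add_sq]; ring

variable {R}

@[simp]
theorem artinSchreier_apply (z : R) : artinSchreier R z = z ^ 2 + z := rfl

variable {F : Type*} [Field F] [Fintype F] [CharP F 2]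

theorem card_artinSchreier_fiber_zero [DecidableEq F] : #{z : F | artinSchreier F z = 0} = 2 := by
  have : ({z : F | artinSchreier F z = 0} : Finset F) = {0, 1} := by
    ext z
    rw [mem_filter, artinSchreier_apply, sq, ← mul_add_one, mul_eq_zero, CharTwo.add_eq_zero]
    simp
  rw [this, card_pair zero_ne_one]

theorem index_range_artinSchreier : (artinSchreier F).range.index = 2 := by
  classical
  have hker : Nat.card (artinSchreier F).ker = 2 := by
    rw [← card_artinSchreier_fiber_zero (F := F), ← Fintype.card_subtype,
      ← Nat.card_eq_fintype_card]
    rfl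
  have h_range := (artinSchreier F).range.card_mul_index
  have h_ker := (artinSchreier F).ker.card_mul_index
  rw [AddSubgroup.index_ker, hker, ← h_range] at h_ker
  have hpos : 0 < Nat.card (artinSchreier F).range := Nat.card_pos
  nlinarith

variable (F) in
noncomputable def artinSchreierChar : AddChar F ℝ :=
  (artinSchreier F).range.indexTwoChar index_range_artinSchreier

theorem artinSchreierChar_ne_one : artinSchreierChar F ≠ 1 := by
  obtain ⟨u, hu⟩ : ∃ u, u ∉ (artinSchreier F).range := by
    by_contra! h
    have := (artinSchreier F).range.index_eq_one.mpr (eq_top_iff.mpr fun u _ => h u)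
    rw [index_range_artinSchreier] at this
    exact absurd this (by norm_num)
  intro h
  have := DFunLike.congr_fun h u
  rw [artinSchreierChar, AddSubgroup.indexTwoChar_of_notMem _ hu, AddChar.one_apply] at this
  norm_num at this

theorem artinSchreierChar_artinSchreier (z : F) :
    artinSchreierChar F (artinSchreier F z) = 1 :=
  AddSubgroup.indexTwoChar_of_mem _ ⟨z, rfl⟩

theorem card_artinSchreier_fiber [DecidableEq F] (w : F) :
    (#{z : F | artinSchreier F z = w} : ℝ) = 1 + artinSchreierChar F w := by
  by_cases hw : w ∈ (artinSchreier F).range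
  · rw [artinSchreierChar, AddSubgroup.indexTwoChar_of_mem _ hw,
      AddMonoidHom.card_fiber_eq_of_mem_range _ hw ⟨0, map_zero _⟩, card_artinSchreier_fiber_zero]
    norm_num
  · rw [artinSchreierChar, AddSubgroup.indexTwoChar_of_notMem _ hw, add_neg_cancel,
      Nat.cast_eq_zero, card_eq_zero, filter_eq_empty_iff]
    exact fun z _ hz => hw ⟨z, hz⟩

end CharTwo

theorem card_mul_card_mul_sq_le_of_sum_eq_zero {ι : Type*} [DecidableEq ι] {s t : Finset ι}
    (hts : t ⊆ s) {f : ι → ℝ} {A : ℝ} (hA : ∀ i ∈ t, f i = A) (hs : ∑ i ∈ s, f i = 0) :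
    #t * #s * A ^ 2 ≤ (#s - #t) * ∑ i ∈ s, f i ^ 2 := by
  have hsum : ∑ i ∈ s \ t, f i = -(#t * A) := by
    rw [sum_sdiff_eq_sub hts, hs, sum_congr rfl hA, sum_const, nsmul_eq_mul, zero_sub]
  have hsum_sq : ∑ i ∈ s \ t, f i ^ 2 = ∑ i ∈ s, f i ^ 2 - #t * A ^ 2 := by
    rw [sum_sdiff_eq_sub hts, sum_congr rfl fun i hi => congrArg (· ^ 2) (hA i hi), sum_const,
      nsmul_eq_mul]
  have hcard : (#(s \ t) : ℝ) = #s - #t := by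
    rw [card_sdiff_of_subset hts, Nat.cast_sub (card_le_card hts)]
  have hCS := sq_sum_le_card_mul_sum_sq (s := s \ t) (f := f)
  rw [hsum, hsum_sq, hcard] at hCS
  linear_combination hCS

namespace FiniteField

variable {F : Type*} [Field F] [Fintype F] [DecidableEq F] {k : ℕ}

theorem card_pow_eq_pow_of_ne_zero (hk : k ≠ 0) {t : F} (ht : t ≠ 0) :
    #{u : F | u ^ k = t ^ k} = (Fintype.card F - 1).gcd k := by
  set t' := Units.mk0 t ht
  have hunits : #{u : F | u ^ k = t ^ k} = #{v : Fˣ | v ^ k = t' ^ k} := by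
    refine (card_nbij (fun v : Fˣ => (v : F)) ?_ ?_ ?_).symm
    · intro v hv
      simp only [mem_coe, mem_filter, mem_univ, true_and] at hv ⊢
      rw [← Units.val_pow_eq_pow_val, hv, Units.val_pow_eq_pow_val, Units.val_mk0]
    · exact fun v _ w _ h => Units.ext h
    · intro u hu
      simp only [mem_coe, mem_filter, mem_univ, true_and] at hu
      have hu0 : u ≠ 0 := fun h => pow_ne_zero k ht (by rw [← hu, h, zero_pow hk])
      exact ⟨Units.mk0 u hu0, by simp [t', Units.ext_iff, hu], rfl⟩
  have hfiber := MonoidHom.card_fiber_eq_of_mem_range (powMonoidHom k) ⟨t', rfl⟩ ⟨1, one_pow k⟩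
  simp only [powMonoidHom_apply] at hfiber
  rw [hunits, hfiber, ← Fintype.card_units, ← Nat.card_eq_fintype_card,
    ← IsCyclic.card_powMonoidHom_ker, ← Fintype.card_subtype, ← Nat.card_eq_fintype_card]
  rfl

theorem card_pow_eq_pow (hk : k ≠ 0) :
    #{p : F × F | p.1 ^ k = p.2 ^ k} = 1 + (Fintype.card F - 1) * (Fintype.card F - 1).gcd k := by
  have hfiber (t : F) :
      #{u : F | u ^ k = t ^ k} = if t = 0 then 1 else (Fintype.card F - 1).gcd k := by
    split_ifs with ht
    · simp [ht, zero_pow hk, pow_eq_zero_iff hk, filter_eq']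
    · exact card_pow_eq_pow_of_ne_zero hk ht
  rw [card_filter, Fintype.sum_prod_type_right]
  simp_rw [← card_filter, hfiber]
  rw [sum_ite, sum_const, sum_const, filter_eq', filter_ne', card_erase_of_mem (mem_univ _)]
  simp

theorem card_image_mul_pow_mul_gcd (hk : k ≠ 0) {d : F} (hd : d ≠ 0) :
    #((univ.erase 0).image fun e : F => d * e ^ k) * (Fintype.card F - 1).gcd k
      = Fintype.card F - 1 := by
  have hfiber : ∀ b ∈ (univ.erase 0).image fun e : F => d * e ^ k,
      #{e ∈ univ.erase 0 | d * e ^ k = b} = (Fintype.card F - 1).gcd k := by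
    simp only [mem_image, mem_erase, mem_univ, and_true]
    rintro _ ⟨e₀, he₀, rfl⟩
    rw [← card_pow_eq_pow_of_ne_zero hk he₀]
    congr 1
    ext e
    simp only [mem_filter, mem_erase, mem_univ, and_true, true_and, mul_right_inj' hd]
    exact ⟨And.right, fun h => ⟨fun he => pow_ne_zero k he₀ (by rw [← h, he, zero_pow hk]), h⟩⟩
  rw [← smul_eq_mul, ← sum_const, ← sum_congr rfl hfiber, ← card_eq_sum_card_image,
    card_erase_of_mem (mem_univ _), card_univ]

end FiniteField

namespace AddChar

section MonomialSum

variable {F : Type*} [Field F] [Fintype F] (ψ : AddChar F ℝ) (k : ℕ)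

def monomialSum (d : F) : ℝ := ∑ t, ψ (d * t ^ k)

@[simp]
theorem monomialSum_zero : ψ.monomialSum k 0 = Fintype.card F := by
  simp [monomialSum]

theorem monomialSum_mul_pow (d : F) {e : F} (he : e ≠ 0) :
    ψ.monomialSum k (d * e ^ k) = ψ.monomialSum k d :=
  Fintype.sum_bijective (e * ·) (Equiv.mulLeft₀ e he).bijective _ _ fun t => by
    rw [mul_pow, mul_assoc]

variable {ψ k} [DecidableEq F]

theorem sum_monomialSum (hψ : ψ.IsPrimitive) (hk : k ≠ 0) :
    ∑ d, ψ.monomialSum k d = Fintype.card F := by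
  simp_rw [monomialSum]
  rw [sum_comm]
  simp [sum_mulShift _ hψ, pow_eq_zero_iff hk]

variable [CharP F 2]

theorem sum_monomialSum_sq (hψ : ψ.IsPrimitive) :
    ∑ d, ψ.monomialSum k d ^ 2 = Fintype.card F * #{p : F × F | p.1 ^ k = p.2 ^ k} := by
  have hsq (d : F) : ψ.monomialSum k d ^ 2 = ∑ p : F × F, ψ (d * (p.1 ^ k + p.2 ^ k)) := by
    rw [monomialSum, sq, sum_mul_sum, ← univ_product_univ, sum_product]
    simp [mul_add, map_add_eq_mul]
  simp_rw [hsq]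
  rw [sum_comm]
  simp [sum_mulShift _ hψ, CharTwo.add_eq_zero, sum_ite, mul_comm]

theorem sq_monomialSum_le (hψ : ψ.IsPrimitive) (hk : k ≠ 0) {d : F} (hd : d ≠ 0) :
    ψ.monomialSum k d ^ 2 ≤ (((Fintype.card F - 1).gcd k : ℕ) - 1 : ℝ) ^ 2 * Fintype.card F := by
  set q := Fintype.card F with hq_def
  set g := (q - 1).gcd k with hg_def
  set C := (univ.erase 0).image fun e : F => d * e ^ k
  have hq : 1 ≤ q := Fintype.card_pos
  have hC_sub : C ⊆ univ.erase 0 := by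
    simp only [C, subset_iff, mem_image, mem_erase, mem_univ, and_true]
    rintro _ ⟨e, he, rfl⟩
    exact mul_ne_zero hd (pow_ne_zero k he)
  have hC_const : ∀ u ∈ C, ψ.monomialSum k u = ψ.monomialSum k d := by
    simp only [C, mem_image, mem_erase, mem_univ, and_true]
    rintro _ ⟨e, he, rfl⟩
    exact ψ.monomialSum_mul_pow k d he
  have hsum : ∑ u ∈ univ.erase 0, ψ.monomialSum k u = 0 := by
    rw [sum_erase_eq_sub (mem_univ _), sum_monomialSum hψ hk, monomialSum_zero, sub_self]
  have hsum_sq : ∑ u ∈ univ.erase 0, ψ.monomialSum k u ^ 2 = q * (q - 1) * (g - 1) := by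
    rw [sum_erase_eq_sub (mem_univ _), sum_monomialSum_sq hψ, FiniteField.card_pow_eq_pow hk,
      monomialSum_zero, ← hq_def, ← hg_def]
    push_cast [Nat.cast_sub hq]
    ring
  have hC_card : (#C : ℝ) * g = q - 1 := by
    rw [← Nat.cast_one, ← Nat.cast_sub hq, ← Nat.cast_mul,
      FiniteField.card_image_mul_pow_mul_gcd hk hd]
  have key := card_mul_card_mul_sq_le_of_sum_eq_zero hC_sub hC_const hsum
  rw [card_erase_of_mem (mem_univ _), card_univ, hsum_sq, Nat.cast_sub hq, Nat.cast_one] at key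
  have hg_key := mul_le_mul_of_nonneg_left key (Nat.cast_nonneg g)
  have hq_sq : (0 : ℝ) < (q - 1) ^ 2 := by
    have : (1 : ℝ) < q := by exact_mod_cast Fintype.one_lt_card
    positivity
  refine le_of_mul_le_mul_left ?_ hq_sq
  linear_combination hg_key - ((q - 1) * ψ.monomialSum k d ^ 2 + (q - 1) * (g - 1) * q) * hC_card

theorem abs_monomialSum_le (hψ : ψ.IsPrimitive) (hk : k ≠ 0) {d : F} (hd : d ≠ 0) :
    |ψ.monomialSum k d| ≤
      (((Fintype.card F - 1).gcd k : ℕ) - 1 : ℝ) * √(Fintype.card F : ℝ) := by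
  have hg : 1 ≤ (Fintype.card F - 1).gcd k := Nat.gcd_pos_of_pos_right _ (Nat.pos_of_ne_zero hk)
  refine abs_le_of_sq_le_sq ?_ (mul_nonneg (by simpa using hg) (Real.sqrt_nonneg _))
  rw [mul_pow, Real.sq_sqrt (Nat.cast_nonneg _)]
  exact sq_monomialSum_le hψ hk hd

end MonomialSum

end AddChar

namespace CharTwo

variable {F : Type*} [Field F] [CharP F 2]

theorem cube_equation_iff_artinSchreier (x y c : F) {s : F} (hs : s ≠ 0) :
    c ^ 3 + (s + c) ^ 3 + (x + c + (s + c)) ^ 3 = y ↔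
      artinSchreier F (c / s) = (y + x ^ 3) / s ^ 3 + artinSchreier F (x / s) := by
  have key : c ^ 3 + (s + c) ^ 3 + (x + c + (s + c)) ^ 3 + y =
      s ^ 3 * ((c / s) ^ 2 + c / s + ((y + x ^ 3) / s ^ 3 + ((x / s) ^ 2 + x / s))) := by
    field_simp
    linear_combination (5 * c ^ 3 + s ^ 3 + s ^ 2 * c + s * c ^ 2 + x ^ 2 * s + x * s ^ 2
      + 3 * (x + s) ^ 2 * c + 6 * (x + s) * c ^ 2) * CharTwo.two_eq_zero (R := F)
  rw [artinSchreier_apply, artinSchreier_apply, ← CharTwo.add_eq_zero, key, mul_eq_zero,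
    or_iff_right (pow_ne_zero 3 hs), CharTwo.add_eq_zero]

variable [Fintype F] [DecidableEq F] {x y : F}

theorem card_solutions_add_eq (hxy : y ≠ x ^ 3) (s : F) :
    (#{c : F | c ^ 3 + (s + c) ^ 3 + (x + c + (s + c)) ^ 3 = y} : ℝ) =
      if s = 0 then 0 else 1 + artinSchreierChar F ((y + x ^ 3) / s ^ 3) := by
  split_ifs with hs
  · subst hs
    simp [CharTwo.add_self_eq_zero, hxy.symm]
  · have hdiv : #{c : F | c ^ 3 + (s + c) ^ 3 + (x + c + (s + c)) ^ 3 = y} =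
        #{z : F | artinSchreier F z = (y + x ^ 3) / s ^ 3 + artinSchreier F (x / s)} :=
      card_equiv (Equiv.divRight₀ s hs) fun c => by
        rw [mem_filter, mem_filter, cube_equation_iff_artinSchreier x y c hs]
        simp
    rw [hdiv, card_artinSchreier_fiber, AddChar.map_add_eq_mul, artinSchreierChar_artinSchreier,
      mul_one]

theorem card_solutions_eq_monomialSum (hxy : y ≠ x ^ 3) :
    (#{p : F × F | p.1 ^ 3 + p.2 ^ 3 + (x + p.1 + p.2) ^ 3 = y} : ℝ) =
      Fintype.card F - 2 + (artinSchreierChar F).monomialSum 3 (y + x ^ 3) := by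
  have hshear : #{p : F × F | p.1 ^ 3 + p.2 ^ 3 + (x + p.1 + p.2) ^ 3 = y} =
      #{p : F × F | p.2 ^ 3 + (p.1 + p.2) ^ 3 + (x + p.2 + (p.1 + p.2)) ^ 3 = y} := by
    have h₁ (a b : F) : a + b + a = b := by rw [add_comm a b, CharTwo.add_cancel_right]
    have h₂ (a b : F) : b + (a + b) = a := by rw [add_comm a b, CharTwo.add_cancel_left]
    refine card_nbij' (fun p => (p.1 + p.2, p.1)) (fun p => (p.2, p.1 + p.2)) ?_ ?_ ?_ ?_ <;>
      intro p _ <;> simp_all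
  have hinv : ∑ s : F, artinSchreierChar F ((y + x ^ 3) / s ^ 3) =
      (artinSchreierChar F).monomialSum 3 (y + x ^ 3) :=
    Fintype.sum_bijective _ inv_involutive.bijective _ _ fun s => by
      rw [inv_pow, div_eq_mul_inv]
  rw [hshear, card_filter, Fintype.sum_prod_type]
  simp_rw [← card_filter]
  push_cast
  simp_rw [card_solutions_add_eq hxy]
  rw [sum_ite, sum_const_zero, zero_add, filter_ne', sum_erase_eq_sub (mem_univ _),
    sum_add_distrib, hinv]
  simp only [sum_const, card_univ, nsmul_eq_mul, mul_one, ne_eq, OfNat.ofNat_ne_zero,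
    not_false_eq_true, zero_pow, div_zero, AddChar.map_zero_eq_one]
  ring

end CharTwo

/-- For `n ≥ 1`, `F = 𝔽_{2^n}`, and `x y : F` with `y ≠ x³`, the number of
ordered pairs `(a, b) ∈ F × F` with `a³ + b³ + (x + a + b)³ = y` is at least
`2^n − 2√(2^n) − 2`. -/
theorem count_affine_points (n : ℕ) (hn : 1 ≤ n) (x y : GaloisField 2 n) (hxy : y ≠ x ^ 3) :
    (2 : ℝ) ^ n - 2 * Real.sqrt ((2 : ℝ) ^ n) - 2 ≤
      ({p : GaloisField 2 n × GaloisField 2 n |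
          p.1 ^ 3 + p.2 ^ 3 + (x + p.1 + p.2) ^ 3 = y} : Set _).ncard := by
  classical
  let _ : Fintype (GaloisField 2 n) := Fintype.ofFinite _
  have hq : (Fintype.card (GaloisField 2 n) : ℝ) = 2 ^ n := by
    rw [← Nat.card_eq_fintype_card, GaloisField.card 2 n (by omega)]
    push_cast
    rfl
  have hd : y + x ^ 3 ≠ 0 := by rwa [Ne, CharTwo.add_eq_zero]
  have hψ := AddChar.IsPrimitive.of_ne_one (CharTwo.artinSchreierChar_ne_one (F := GaloisField 2 n))
  have hbound := abs_le.mp (AddChar.abs_monomialSum_le hψ three_ne_zero hd)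
  have hg : ((Fintype.card (GaloisField 2 n) - 1).gcd 3 : ℝ) ≤ 3 :=
    Nat.cast_le.mpr (Nat.gcd_le_right _ three_pos)
  rw [Set.ncard_eq_toFinset_card', Set.toFinset_ofPred, CharTwo.card_solutions_eq_monomialSum hxy]
  rw [hq] at hbound ⊢
  nlinarith [Real.sqrt_nonneg ((2 : ℝ) ^ n)]
end

section
/- Let K be an algebraically closed field of characteristic 2, and let x, y ∈ K with y ≠ x³. Then the polynomial a²b + ab² + x·a² + x·b² + x²·a + x²·b + x³ + y, regarded as an element of the polynomial ring K[a, b], is irreducible. -/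
/-!
Translating both variables by `x` turns the polynomial into `ab(a + b) + c` with
`c = y - x³ ≠ 0`, since in characteristic 2 the cross terms of the expansion vanish.
As a quadratic `a·b² + a²·b + c` in `b` over `K[a]` this is primitive, so by Gauss's lemma
it suffices that it has no root `r` in `K(a)`. But `s = a·r` is a root of the monic
`T² + a²T + ac`, hence lies in `K[a]`; then `a ∣ s²`, so `s = a·t` with
`a·t² + a²·t + c = 0`, and `a ∣ c`, which is absurd.
-/

namespace Polynomial

variable {R : Type*} [CommRing R] [IsDomain R] {p c : R}

theorem isPrimitive_C_mul_X_sq_add_C_sq_mul_X_add_C (hp : Prime p) (hc : ¬p ∣ c) :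
    (C p * X ^ 2 + C p ^ 2 * X + C c).IsPrimitive := by
  intro r hr
  have hr_coeff := (C_dvd_iff_dvd_coeff r _).mp hr
  obtain ⟨t, rfl⟩ : r ∣ p := by simpa [← C_pow, coeff_X, -map_pow] using hr_coeff 2
  have hrc : r ∣ c := by simpa [← C_pow, coeff_X, -map_pow] using hr_coeff 0
  refine (hp.irreducible.isUnit_or_isUnit rfl).resolve_right fun ht ↦ hc ?_
  exact ht.mul_right_dvd.mpr hrc

theorem aeval_C_mul_X_sq_add_C_sq_mul_X_add_C_ne_zero [IsIntegrallyClosed R]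
    {F : Type*} [Field F] [Algebra R F] [IsFractionRing R F] (hp : Prime p) (hc : ¬p ∣ c)
    (r : F) : aeval r (C p * X ^ 2 + C p ^ 2 * X + C c) ≠ 0 := by
  intro hr
  simp only [map_add, map_mul, map_pow, aeval_C, aeval_X] at hr
  set ι := algebraMap R F
  -- `p r` is a root of the monic `X² + p² X + p c`, hence lies in `R`
  have hint : IsIntegral R (ι p * r) := by
    refine ⟨X ^ 2 + C (p ^ 2) * X + C (p * c), by monicity!, ?_⟩
    simp only [eval₂_add, eval₂_mul, eval₂_pow, eval₂_X, eval₂_C, map_mul, map_pow]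
    linear_combination ι p * hr
  obtain ⟨s, hs⟩ := IsIntegrallyClosed.isIntegral_iff.mp hint
  have hs_root : s ^ 2 + p ^ 2 * s + p * c = 0 := IsFractionRing.injective R F <| by
    simp only [map_add, map_mul, map_pow, map_zero, hs]
    linear_combination ι p * hr
  have hps : p ∣ s ^ 2 := ⟨-(p * s + c), by linear_combination hs_root⟩
  obtain ⟨t, rfl⟩ := hp.dvd_of_dvd_pow hps
  have ht_root : p * t ^ 2 + p ^ 2 * t + c = 0 :=
    mul_left_cancel₀ hp.ne_zero (by linear_combination hs_root)
  exact hc ⟨-(t ^ 2 + p * t), by linear_combination ht_root⟩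

theorem irreducible_C_mul_X_sq_add_C_sq_mul_X_add_C [IsGCDMonoid R] (hp : Prime p)
    (hc : ¬p ∣ c) : Irreducible (C p * X ^ 2 + C p ^ 2 * X + C c) := by
  have hprim := isPrimitive_C_mul_X_sq_add_C_sq_mul_X_add_C hp hc
  rw [hprim.irreducible_iff_irreducible_map_fraction_map (K := FractionRing R)]
  refine irreducible_of_degree_le_three_of_not_isRoot ?_ fun r hr ↦ ?_
  · simp only [Polynomial.map_add, Polynomial.map_mul, Polynomial.map_pow, map_C, map_X,
      ← map_pow]
    rw [natDegree_quadratic ((map_ne_zero_iff _ (IsFractionRing.injective R _)).mpr hp.ne_zero)]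
    decide
  · rw [IsRoot, eval_map_algebraMap] at hr
    exact aeval_C_mul_X_sq_add_C_sq_mul_X_add_C_ne_zero hp hc r hr

end Polynomial

namespace MvPolynomial

variable {R σ : Type*} [CommRing R]

noncomputable def translateVars (v : σ → R) : MvPolynomial σ R ≃ₐ[R] MvPolynomial σ R :=
  AlgEquiv.ofAlgHom (aeval fun i ↦ X i + C (v i)) (aeval fun i ↦ X i - C (v i))
    (by ext i; simp) (by ext i; simp)

theorem translateVars_apply (v : σ → R) (p : MvPolynomial σ R) :
    translateVars v p = aeval (fun i ↦ X i + C (v i)) p :=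
  rfl

theorem irreducible_X_sq_mul_X_add_X_mul_X_sq_add_C [IsDomain R] [UniqueFactorizationMonoid R]
    {c : R} (hc : c ≠ 0) :
    Irreducible (X 0 ^ 2 * X 1 + X 0 * X 1 ^ 2 + C c : MvPolynomial (Fin 2) R) := by
  have hX : ¬(X 0 : MvPolynomial (Fin 1) R) ∣ C c := fun ⟨q, hq⟩ ↦ hc <| by
    simpa using congrArg constantCoeff hq
  rw [← MulEquiv.irreducible_iff (finSuccEquiv R 1)]
  convert Polynomial.irreducible_C_mul_X_sq_add_C_sq_mul_X_add_C X_prime hX using 1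
  simp only [map_add, map_mul, map_pow, finSuccEquiv_X_zero]
  rw [show (1 : Fin 2) = (0 : Fin 1).succ from rfl, finSuccEquiv_X_succ, finSuccEquiv_apply,
    eval₂Hom_C, RingHom.comp_apply]
  ring

end MvPolynomial

open MvPolynomial

theorem cubic_irreducible_general (K : Type*) [Field K] [CharP K 2]
    (x y : K) (hxy : y ≠ x ^ 3) :
    Irreducible ((X 0) ^ 2 * X 1 + X 0 * (X 1) ^ 2 + C x * (X 0) ^ 2 + C x * (X 1) ^ 2
      + C (x ^ 2) * X 0 + C (x ^ 2) * X 1 + C (x ^ 3) + C y : MvPolynomial (Fin 2) K) := by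
  have hc : y - x ^ 3 ≠ 0 := sub_ne_zero.mpr hxy
  convert (irreducible_X_sq_mul_X_add_X_mul_X_sq_add_C hc).map (translateVars fun _ ↦ x) using 1
  simp only [translateVars_apply, map_add, map_mul, map_pow, aeval_X, aeval_C, algebraMap_eq,
    map_sub]
  linear_combination -(X 0 * C x ^ 2 + X 1 * C x ^ 2 + 2 * X 0 * X 1 * C x) *
    CharTwo.two_eq_zero (R := MvPolynomial (Fin 2) K)

/-- Over an algebraically closed field `K` of characteristic 2, for `x y : K`
with `y ≠ x³`, the polynomial `a²b + ab² + x·a² + x·b² + x²·a + x²·b + x³ + y` in `K[a, b]`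
is irreducible.  Here `a = X 0` and `b = X 1` in `MvPolynomial (Fin 2) K`. -/
theorem cubic_irreducible (K : Type*) [Field K] [IsAlgClosed K] [CharP K 2]
    (x y : K) (hxy : y ≠ x ^ 3) :
    Irreducible ((X 0) ^ 2 * X 1 + X 0 * (X 1) ^ 2 + C x * (X 0) ^ 2 + C x * (X 1) ^ 2
      + C (x ^ 2) * X 0 + C (x ^ 2) * X 1 + C (x ^ 3) + C y : MvPolynomial (Fin 2) K) :=
  cubic_irreducible_general K x y hxy
end

section
/- For every n ≥ 3, the set S = {(t, t³) : t ∈ 𝔽_{2^n}} is a maximal Sidon set in the additive group 𝔽_{2^n} × 𝔽_{2^n}: S is a Sidon set, and for every (x, y) ∈ (𝔽_{2^n} × 𝔽_{2^n}) \ S there exist pairwise distinct elements a, b, c ∈ S with a + b + c = (x, y), so that S ∪ {(x,y)} is not a Sidon set for any (x,y) ∉ S. -/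
section Aux

variable {F : Type*} [Field F] [Fintype F] [DecidableEq F] [CharP F 2]

private lemma two_eq_zero' : (2 : F) = 0 := by
  have := CharP.cast_eq_zero F 2
  exact_mod_cast this

/-- `Sol x` means `x` is in the image of the Artin–Schreier map `s ↦ s² + s`. -/
def Sol (x : F) : Prop := ∃ s : F, s ^ 2 + s = x

private lemma sol_zero : Sol (0 : F) := ⟨0, by ring⟩

private lemma sol_sq (x : F) : Sol (x ^ 2 + x) := ⟨x, rfl⟩

private lemma sol_add {x y : F} (hx : Sol x) (hy : Sol y) : Sol (x + y) := by
  have h2 : (2 : F) = 0 := two_eq_zero'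
  obtain ⟨s, hs⟩ := hx; obtain ⟨t, ht⟩ := hy
  exact ⟨s + t, by linear_combination hs + ht + (s * t) * h2⟩

/-- The complement of the image of the Artin–Schreier map is a coset, hence closed
under "sum of two non-elements lands in the image". -/
private lemma not_sol_add {x y : F} (hx : ¬ Sol x) (hy : ¬ Sol y) : Sol (x + y) := by
  have h2 : (2 : F) = 0 := two_eq_zero'
  set A : Finset F := Finset.image (fun s : F => s ^ 2 + s) Finset.univ with hA
  have hfiber : ∀ b ∈ A, ({a ∈ Finset.univ | a ^ 2 + a = b} : Finset F).card ≤ 2 := by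
    intro b _
    rcases ({a ∈ Finset.univ | a ^ 2 + a = b} : Finset F).eq_empty_or_nonempty with h | ⟨z0, hz0⟩
    · simp [h]
    · have hz0' : z0 ^ 2 + z0 = b := (Finset.mem_filter.mp hz0).2
      have hsub : ({a ∈ Finset.univ | a ^ 2 + a = b} : Finset F) ⊆ {z0, z0 + 1} := by
        intro z hz
        have hz' : z ^ 2 + z = b := (Finset.mem_filter.mp hz).2
        have hmul : (z + z0) * (z + z0 + 1) = 0 := by
          linear_combination hz' + hz0' + (b + z * z0) * h2
        rcases mul_eq_zero.mp hmul with h | h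
        · have : z = z0 := by linear_combination h - z0 * h2
          simp [this]
        · have : z = z0 + 1 := by linear_combination h - z0 * h2 - h2
          simp [this]
      calc ({a ∈ Finset.univ | a ^ 2 + a = b} : Finset F).card
          ≤ ({z0, z0 + 1} : Finset F).card := Finset.card_le_card hsub
        _ ≤ 2 := by
            refine (Finset.card_insert_le _ _).trans ?_
            simp
  have hcard : Fintype.card F ≤ 2 * A.card := by
    have := Finset.card_le_mul_card_image (f := fun s : F => s ^ 2 + s) Finset.univ 2 hfiber
    simpa [hA] using this
  set B : Finset F := A.image (fun a => x + a) with hB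
  have hdisj : Disjoint A B := by
    rw [Finset.disjoint_left]
    intro a haA haB
    obtain ⟨s, -, hs⟩ := Finset.mem_image.mp haA
    obtain ⟨a', ha'A, ha'⟩ := Finset.mem_image.mp haB
    obtain ⟨t, -, ht⟩ := Finset.mem_image.mp ha'A
    exact hx ⟨s + t, by linear_combination hs - ht - ha' + (t ^ 2 + t + s * t) * h2⟩
  have hBcard : B.card = A.card := Finset.card_image_of_injective _ (add_right_injective x)
  have huniv : A ∪ B = Finset.univ := by
    apply Finset.eq_univ_of_card
    have h1 : (A ∪ B).card = A.card + B.card := Finset.card_union_of_disjoint hdisj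
    have h3 : (A ∪ B).card ≤ Fintype.card F := by
      simpa using Finset.card_le_univ (A ∪ B)
    omega
  have hy' : y ∈ A ∪ B := huniv ▸ Finset.mem_univ y
  rcases Finset.mem_union.mp hy' with h | h
  · exact absurd (by obtain ⟨s, -, hs⟩ := Finset.mem_image.mp h; exact ⟨s, hs⟩) hy
  · obtain ⟨a, haA, hxa⟩ := Finset.mem_image.mp h
    obtain ⟨s, -, hs⟩ := Finset.mem_image.mp haA
    exact ⟨s, by linear_combination hs + hxa - x * h2⟩

private lemma not_sol_of_sol_not {z w : F} (hz : Sol z) (hw : ¬ Sol w) : ¬ Sol (z + w) := by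
  intro h
  have h2 : (2 : F) = 0 := two_eq_zero'
  have := sol_add hz h
  have e : z + (z + w) = w := by linear_combination z * h2
  rw [e] at this
  exact hw this

private lemma exists_not_mem' (s : Finset F) (h : s.card < Fintype.card F) :
    ∃ a : F, a ∉ s := by
  by_contra hc
  push_neg at hc
  have : s = Finset.univ := Finset.eq_univ_iff_forall.mpr hc
  rw [this, Finset.card_univ] at h
  omega

/-- Key existence lemma: for `d ≠ 0` in a finite field of characteristic two with at
least 8 elements, there is `u ≠ 0` with `d·u³` in the image of the Artin–Schreier map. -/
private lemma exists_cube (hcard : 8 ≤ Fintype.card F) {d : F} (hd : d ≠ 0) :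
    ∃ u : F, u ≠ 0 ∧ Sol (d * u ^ 3) := by
  have h2 : (2 : F) = 0 := two_eq_zero'
  by_contra hcon
  push_neg at hcon
  -- a square root of d
  obtain ⟨m, -, hm⟩ := FiniteField.card F 2
  set e : F := d ^ (2 ^ ((m : ℕ) - 1)) with he_def
  have he : e ^ 2 = d := by
    rw [he_def, ← pow_mul]
    have hmpos : (m : ℕ) ≠ 0 := Nat.pos_iff_ne_zero.mp m.pos
    obtain ⟨k, hk⟩ := Nat.exists_eq_succ_of_ne_zero hmpos
    have hpow : 2 ^ ((m : ℕ) - 1) * 2 = 2 ^ (m : ℕ) := by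
      rw [hk]; simp [pow_succ]
    rw [hpow, ← hm, FiniteField.pow_card]
  have key : ∀ u : F, u ≠ 0 → u ≠ 1 → ¬ Sol ((d + e) * u) := by
    intro u hu0 hu1
    have hu1' : u + 1 ≠ 0 := by
      intro h
      exact hu1 (by linear_combination h - h2)
    have hAx : Sol (d * u ^ 3 + d * 1 ^ 3) :=
      not_sol_add (hcon u hu0) (hcon 1 one_ne_zero)
    have hBx : ¬ Sol (d * (u + 1) ^ 3) := hcon _ hu1'
    have hCx : ¬ Sol ((d * u ^ 3 + d * 1 ^ 3) + d * (u + 1) ^ 3) :=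
      not_sol_of_sol_not hAx hBx
    have heq : (d * u ^ 3 + d * 1 ^ 3) + d * (u + 1) ^ 3 = d * u ^ 2 + d * u := by
      linear_combination (d * u ^ 3 + d * u ^ 2 + d * u + d) * h2
    rw [heq] at hCx
    have hDx : ¬ Sol (((e * u) ^ 2 + e * u) + (d * u ^ 2 + d * u)) :=
      not_sol_of_sol_not (sol_sq (e * u)) hCx
    have heq2 : ((e * u) ^ 2 + e * u) + (d * u ^ 2 + d * u) = (d + e) * u := by
      linear_combination u ^ 2 * he + d * u ^ 2 * h2
    rwa [heq2] at hDx
  by_cases hce : d + e = 0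
  · have hsmall : ({0, 1} : Finset F).card < Fintype.card F := by
      have : ({0, 1} : Finset F).card ≤ 2 := (Finset.card_insert_le _ _).trans (by simp)
      omega
    obtain ⟨u, hu⟩ := exists_not_mem' _ hsmall
    simp only [Finset.mem_insert, Finset.mem_singleton, not_or] at hu
    refine key u hu.1 hu.2 ?_
    rw [hce, zero_mul]
    exact sol_zero
  · have key2 : ∀ z : F, z ≠ 0 → z ≠ d + e → ¬ Sol z := by
      intro z hz0 hzc
      have hu0 : (d + e)⁻¹ * z ≠ 0 := mul_ne_zero (inv_ne_zero hce) hz0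
      have hu1 : (d + e)⁻¹ * z ≠ 1 := by
        intro h
        apply hzc
        field_simp at h
        exact h
      have := key _ hu0 hu1
      rwa [show (d + e) * ((d + e)⁻¹ * z) = z by field_simp] at this
    have hsmall1 : ({0, d + e} : Finset F).card < Fintype.card F := by
      have : ({0, d + e} : Finset F).card ≤ 2 := (Finset.card_insert_le _ _).trans (by simp)
      omega
    obtain ⟨z1, hz1⟩ := exists_not_mem' _ hsmall1
    simp only [Finset.mem_insert, Finset.mem_singleton, not_or] at hz1
    have hsmall2 : ({0, d + e, z1, z1 + (d + e)} : Finset F).card < Fintype.card F := by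
      have : ({0, d + e, z1, z1 + (d + e)} : Finset F).card ≤ 4 := by
        refine (Finset.card_insert_le _ _).trans ?_
        have : ({d + e, z1, z1 + (d + e)} : Finset F).card ≤ 3 := by
          refine (Finset.card_insert_le _ _).trans ?_
          have : ({z1, z1 + (d + e)} : Finset F).card ≤ 2 :=
            (Finset.card_insert_le _ _).trans (by simp)
          omega
        omega
      omega
    obtain ⟨z2, hz2⟩ := exists_not_mem' _ hsmall2
    simp only [Finset.mem_insert, Finset.mem_singleton, not_or] at hz2
    have hs1 := key2 z1 hz1.1 hz1.2
    have hs2 := key2 z2 hz2.1 hz2.2.1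
    have hsum := not_sol_add hs1 hs2
    have hne0 : z1 + z2 ≠ 0 := by
      intro h
      exact hz2.2.2.1 (show z2 = z1 by linear_combination h - z1 * h2)
    have hnec : z1 + z2 ≠ d + e := by
      intro h
      exact hz2.2.2.2 (by linear_combination h - z1 * h2)
    exact key2 _ hne0 hnec hsum

end Aux


/-- A subset `S` of an abelian group is Sidon: whenever `a + b = c + d` with
`a, b, c, d ∈ S`, `a ≠ b`, and `c ≠ d`, one has `{a, b} = {c, d}`. -/
def IsSidon {G : Type*} [AddCommGroup G] (S : Set G) : Prop :=
  ∀ a ∈ S, ∀ b ∈ S, ∀ c ∈ S, ∀ d ∈ S,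
    a ≠ b → c ≠ d → a + b = c + d → ({a, b} : Set G) = {c, d}

/-- For `n ≥ 3`, the set `S = {(t, t³) : t ∈ 𝔽_{2^n}}` is a maximal Sidon set
in `𝔽_{2^n} × 𝔽_{2^n}`: it is Sidon, every point outside `S` is the sum of three pairwise
distinct elements of `S`, and hence adjoining any point outside `S` destroys the Sidon
property. -/
theorem cube_graph_maximal_sidon (n : ℕ) (hn : 3 ≤ n) :
    IsSidon {q : GaloisField 2 n × GaloisField 2 n | ∃ t, q = (t, t ^ 3)} ∧
    (∀ p : GaloisField 2 n × GaloisField 2 n,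
      p ∉ {q : GaloisField 2 n × GaloisField 2 n | ∃ t, q = (t, t ^ 3)} →
      ∃ a ∈ {q : GaloisField 2 n × GaloisField 2 n | ∃ t, q = (t, t ^ 3)},
      ∃ b ∈ {q : GaloisField 2 n × GaloisField 2 n | ∃ t, q = (t, t ^ 3)},
      ∃ c ∈ {q : GaloisField 2 n × GaloisField 2 n | ∃ t, q = (t, t ^ 3)},
        a ≠ b ∧ a ≠ c ∧ b ≠ c ∧ a + b + c = p) ∧
    (∀ p : GaloisField 2 n × GaloisField 2 n,
      p ∉ {q : GaloisField 2 n × GaloisField 2 n | ∃ t, q = (t, t ^ 3)} →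
      ¬ IsSidon ({q : GaloisField 2 n × GaloisField 2 n | ∃ t, q = (t, t ^ 3)} ∪ {p})) := by
  classical
  letI : Fintype (GaloisField 2 n) := Fintype.ofFinite _
  have h2 : (2 : GaloisField 2 n) = 0 := two_eq_zero'
  have hcard : 8 ≤ Fintype.card (GaloisField 2 n) := by
    rw [Fintype.card_eq_nat_card, GaloisField.card 2 n (by omega)]
    calc (8 : ℕ) = 2 ^ 3 := by norm_num
      _ ≤ 2 ^ n := Nat.pow_le_pow_right (by norm_num) hn
  -- Part 1: Sidon
  have hsidon : IsSidon {q : GaloisField 2 n × GaloisField 2 n | ∃ t, q = (t, t ^ 3)} := by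
    rintro a ⟨s, rfl⟩ b ⟨t, rfl⟩ c ⟨u, rfl⟩ d ⟨v, rfl⟩ hab hcd hsum
    have hst : s ≠ t := fun h => hab (by rw [h])
    have h1 : s + t = u + v := by
      have := congrArg Prod.fst hsum
      simpa using this
    have h2' : s ^ 3 + t ^ 3 = u ^ 3 + v ^ 3 := by
      have := congrArg Prod.snd hsum
      simpa using this
    have hst0 : s + t ≠ 0 := by
      intro h
      exact hst (by linear_combination h - t * h2)
    have e1 : (s + t) * ((s + t) ^ 2 + s * t) = s ^ 3 + t ^ 3 := by
      linear_combination (2 * s ^ 2 * t + 2 * s * t ^ 2) * h2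
    have e2 : (u + v) * ((u + v) ^ 2 + u * v) = u ^ 3 + v ^ 3 := by
      linear_combination (2 * u ^ 2 * v + 2 * u * v ^ 2) * h2
    have hprod : s * t = u * v := by
      have e4 : (s + t) * ((s + t) ^ 2 + s * t) = (s + t) * ((s + t) ^ 2 + u * v) := by
        rw [e1, h2', ← e2, ← h1]
      exact add_left_cancel (mul_left_cancel₀ hst0 e4)
    have e6 : (u + s) * (u + t) = 0 := by
      linear_combination u * h1 + hprod + (u ^ 2 + u * v) * h2
    rcases mul_eq_zero.mp e6 with h | h
    · have hus : u = s := by linear_combination h - s * h2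
      have hv : v = t := by linear_combination - h1 - hus
      rw [hus, hv]
    · have hut : u = t := by linear_combination h - t * h2
      have hv : v = s := by linear_combination - h1 - hut
      rw [hut, hv]
      exact Set.pair_comm _ _
  -- Part 2: covering
  have hcov : ∀ p : GaloisField 2 n × GaloisField 2 n,
      p ∉ {q : GaloisField 2 n × GaloisField 2 n | ∃ t, q = (t, t ^ 3)} →
      ∃ a ∈ {q : GaloisField 2 n × GaloisField 2 n | ∃ t, q = (t, t ^ 3)},
      ∃ b ∈ {q : GaloisField 2 n × GaloisField 2 n | ∃ t, q = (t, t ^ 3)},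
      ∃ c ∈ {q : GaloisField 2 n × GaloisField 2 n | ∃ t, q = (t, t ^ 3)},
        a ≠ b ∧ a ≠ c ∧ b ≠ c ∧ a + b + c = p := by
    rintro ⟨x, y⟩ hp
    have hd : y + x ^ 3 ≠ 0 := by
      intro h
      refine hp ⟨x, ?_⟩
      have hy : y = x ^ 3 := by linear_combination h - x ^ 3 * h2
      rw [hy]
    obtain ⟨u, hu, s, hs⟩ := exists_cube hcard hd
    set w : GaloisField 2 n := u⁻¹ with hw_def
    have hw0 : w ≠ 0 := inv_ne_zero hu
    have huw : u * w = 1 := mul_inv_cancel₀ hu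
    have hs2 : w ^ 3 * s ^ 2 + w ^ 3 * s = y + x ^ 3 := by
      linear_combination w ^ 3 * hs + (y + x ^ 3) * (u ^ 2 * w ^ 2 + u * w + 1) * huw
    refine ⟨(x + w * s, (x + w * s) ^ 3), ⟨x + w * s, rfl⟩,
      (x + w * s + w, (x + w * s + w) ^ 3), ⟨x + w * s + w, rfl⟩,
      (x + w, (x + w) ^ 3), ⟨x + w, rfl⟩, ?_, ?_, ?_, ?_⟩
    · intro h
      have h1 := congrArg Prod.fst h
      simp only at h1
      exact hw0 (by linear_combination - h1)
    · intro h
      have h1 := congrArg Prod.fst h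
      simp only at h1
      have hws : w * s = w := by linear_combination h1
      have hs1 : s = 1 := mul_left_cancel₀ hw0 (by rw [mul_one]; exact hws)
      rw [hs1] at hs2
      exact hd (by linear_combination - hs2 + w ^ 3 * h2)
    · intro h
      have h1 := congrArg Prod.fst h
      simp only at h1
      have hws : w * s = 0 := by linear_combination h1
      have hs0 : s = 0 := by
        rcases mul_eq_zero.mp hws with h' | h'
        · exact absurd h' hw0
        · exact h'
      rw [hs0] at hs2
      exact hd (by linear_combination - hs2)
    · have hfst : (x + w * s) + (x + w * s + w) + (x + w) = x := by
        linear_combination (x + w * s + w) * h2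
      have hsnd : (x + w * s) ^ 3 + (x + w * s + w) ^ 3 + (x + w) ^ 3 = y := by
        linear_combination hs2 + ((x + w * s) ^ 3 + 3 * x ^ 2 * w + 3 * x * w ^ 2 * s
          + 3 * x * w ^ 2 + w ^ 3 * s ^ 2 + w ^ 3 * s + w ^ 3 + x ^ 3) * h2
      exact Prod.ext hfst hsnd
  refine ⟨hsidon, hcov, ?_⟩
  -- Part 3
  intro p hp hbad
  obtain ⟨a, ha, b, hb, c, hc, hab, hac, hbc, habc⟩ := hcov p hp
  have hcp : c ≠ p := fun h => hp (h ▸ hc)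
  have hcc : c + c = 0 := by
    have h1 : c.1 + c.1 = 0 := CharTwo.add_self_eq_zero c.1
    have h2'' : c.2 + c.2 = 0 := CharTwo.add_self_eq_zero c.2
    exact Prod.ext h1 h2''
  have hsum' : a + b = c + p := by
    rw [← habc, show c + (a + b + c) = a + b + (c + c) by abel, hcc, add_zero]
  have hpair := hbad a (Or.inl ha) b (Or.inl hb) c (Or.inl hc) p (Or.inr rfl) hab hcp hsum'
  have hpm : p ∈ ({a, b} : Set (GaloisField 2 n × GaloisField 2 n)) := by
    rw [hpair]
    exact Set.mem_insert_iff.mpr (Or.inr rfl)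
  rcases hpm with h | h
  · exact hp (h ▸ ha)
  · exact hp (h ▸ hb)
end

section
/- Let G = (ℤ/2ℤ)^n, let Q ≤ G be a subgroup with quotient map π: G → G/Q. Let S ⊆ G be a Sidon set and let B ⊆ S be a subset on which π is injective, such that every element s ∈ S \ B satisfies π(s) ∈ π(B). Then |S \ B| ≤ |Q|, and hence |S| ≤ |B| + |Q|. -/
/-! Each `s ∈ S \ B` has a partner `b ∈ B` in its coset, and `s ↦ s - b` maps `S \ B` into `Q`.
It is injective because `s - b = s' - b'` means `s + b' = s' + b`, and the Sidon property then
forces `s = s'`, since `s ∉ B` cannot equal `b'`. -/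

namespace IsSidon

variable {G : Type*} [AddCommGroup G]

theorem eq_of_add_eq_add {S : Set G} (hS : IsSidon S) {a b c d : G}
    (ha : a ∈ S) (hb : b ∈ S) (hc : c ∈ S) (hd : d ∈ S)
    (hab : a ≠ b) (hcd : c ≠ d) (had : a ≠ d) (h : a + b = c + d) : a = c := by
  have ha' : a ∈ ({c, d} : Set G) := hS a ha b hb c hc d hd hab hcd h ▸ Set.mem_insert a {b}
  simpa [had] using ha'

theorem card_sdiff_le_card_of_mk_mem_image [DecidableEq G] {Q : AddSubgroup G} [Finite Q]
    {S B : Finset G} (hS : IsSidon (S : Set G)) (hBS : B ⊆ S)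
    (hcover : ∀ s ∈ S, s ∉ B →
      QuotientAddGroup.mk' Q s ∈ QuotientAddGroup.mk' Q '' (B : Set G)) :
    (S \ B).card ≤ Nat.card Q := by
  have hpartner : ∀ s : (S \ B : Finset G), ∃ b ∈ B, s.1 - b ∈ Q := by
    rintro ⟨s, hs⟩
    rw [Finset.mem_sdiff] at hs
    obtain ⟨b, hb, hbs⟩ := hcover s hs.1 hs.2
    exact ⟨b, hb, by simpa [QuotientAddGroup.eq, neg_add_eq_sub] using hbs⟩
  choose partner hpartner_mem hpartner_sub using hpartner
  have hne : ∀ s t : (S \ B : Finset G), s.1 ≠ partner t := fun s t hst =>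
    (Finset.mem_sdiff.mp s.2).2 (hst ▸ hpartner_mem t)
  have hinj : Function.Injective fun s => (⟨s.1 - partner s, hpartner_sub s⟩ : Q) := by
    intro s t hst
    have hsum : s.1 + partner t = t.1 + partner s := by
      rw [← sub_eq_sub_iff_add_eq_add]
      exact congrArg Subtype.val hst
    have hmem : ∀ u : (S \ B : Finset G), u.1 ∈ S := fun u => (Finset.mem_sdiff.mp u.2).1
    exact Subtype.ext <| hS.eq_of_add_eq_add (hmem s) (hBS (hpartner_mem t)) (hmem t)
      (hBS (hpartner_mem s)) (hne s t) (hne t s) (hne s s) hsum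
  simpa only [Nat.card_eq_fintype_card, Fintype.card_coe] using
    Nat.card_le_card_of_injective _ hinj

end IsSidon

theorem extension_size_bound_general (n : ℕ) (Q : AddSubgroup (Fin n → ZMod 2))
    (S B : Finset (Fin n → ZMod 2)) (hS : IsSidon (↑S : Set (Fin n → ZMod 2)))
    (hBS : B ⊆ S)
    (hcover : ∀ s ∈ S, s ∉ B →
      (QuotientAddGroup.mk' Q) s ∈ (QuotientAddGroup.mk' Q) '' (↑B : Set (Fin n → ZMod 2))) :
    (S \ B).card ≤ Nat.card Q ∧ S.card ≤ B.card + Nat.card Q := by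
  have hsdiff := hS.card_sdiff_le_card_of_mk_mem_image hBS hcover
  have hsplit := Finset.card_sdiff_add_card_eq_card hBS
  exact ⟨hsdiff, by omega⟩

/-- Let `Q ≤ G = (ℤ/2ℤ)^n` with quotient map `π`, let `S ⊆ G` be Sidon and
`B ⊆ S` a subset on which `π` is injective such that every `s ∈ S \ B` has `π(s) ∈ π(B)`.
Then `|S \ B| ≤ |Q|`, and hence `|S| ≤ |B| + |Q|`. -/
theorem extension_size_bound (n : ℕ) (Q : AddSubgroup (Fin n → ZMod 2))
    (S B : Finset (Fin n → ZMod 2)) (hS : IsSidon (↑S : Set (Fin n → ZMod 2)))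
    (hBS : B ⊆ S)
    (hinj : Set.InjOn (QuotientAddGroup.mk' Q) (↑B : Set (Fin n → ZMod 2)))
    (hcover : ∀ s ∈ S, s ∉ B →
      (QuotientAddGroup.mk' Q) s ∈ (QuotientAddGroup.mk' Q) '' (↑B : Set (Fin n → ZMod 2))) :
    (S \ B).card ≤ Nat.card Q ∧ S.card ≤ B.card + Nat.card Q :=
  extension_size_bound_general n Q S B hS hBS hcover
end

section
/- Let G = (ℤ/2ℤ)^n, let Q ≤ G be a subgroup of index 2^m (so |Q| = 2^{n−m}), and let π: G → G/Q be the quotient map. Let A ⊆ G/Q be a Sidon set, and let J ≥ 1 be such that for every p ∈ (G/Q) \ A there exist at least J pairwise disjoint unordered triples {a, b, c} of pairwise distinct elements of A with a + b + c = p. Suppose that (2^n − |Q|·|A|)·(1 − 2^{m−n})^J < 1. Then there exists a set B ⊆ G such that π is injective on B, π(B) = A, and for every x ∈ G with π(x) ∉ A there exist pairwise distinct b₁, b₂, b₃ ∈ B with b₁ + b₂ + b₃ = x. -/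
open Finset Function

lemma exists_forall_notMem_of_sum_ncard_lt {ι Ω : Type*} [Finite Ω] (t : Finset ι)
    (s : ι → Set Ω) (h : ∑ i ∈ t, (s i).ncard < Nat.card Ω) : ∃ ω, ∀ i ∈ t, ω ∉ s i := by
  by_contra! hcov
  have hsub : (Set.univ : Set Ω) ⊆ ⋃ i ∈ t, s i := fun ω _ => by simpa using hcov ω
  have := (Set.ncard_le_ncard hsub).trans (t.set_ncard_biUnion_le s)
  rw [Set.ncard_univ] at this
  omega

lemma ncard_setOf_forall_ne {ι M : Type*} [Fintype ι] [Finite M] (t : ι → M) :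
    {v : ι → M | ∀ i, v i ≠ t i}.ncard = (Nat.card M - 1) ^ Fintype.card ι := by
  classical
  have := Fintype.ofFinite M
  have hpi : {v : ι → M | ∀ i, v i ≠ t i} = Fintype.piFinset fun i => {t i}ᶜ := by
    ext v; simp
  rw [hpi, Set.ncard_coe_finset, Fintype.card_piFinset]
  simp [card_compl, Nat.card_eq_fintype_card]

lemma AddMonoidHom.ncard_preimage_mul_card {α β : Type*} [AddGroup α] [Finite α] [AddMonoid β]
    (f : α →+ β) (hf : Surjective f) (s : Set β) :
    (f ⁻¹' s).ncard * Nat.card β = s.ncard * Nat.card α := by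
  classical
  have := Fintype.ofFinite α
  have : Finite β := Finite.of_surjective f hf
  have := Fintype.ofFinite β
  have hpre (u : Finset β) : #{a | f a ∈ u} = #u * #{a | f a = 0} := by
    rw [← sum_card_fiberwise_eq_card_filter, ← smul_eq_mul, ← sum_const]
    exact sum_congr rfl fun b _ => card_fiber_eq_of_mem_range f (hf b) (hf 0)
  have hα : Fintype.card α = Fintype.card β * #{a | f a = 0} := by
    simpa using hpre univ
  have hs : (f ⁻¹' s).ncard = #{a | f a ∈ s.toFinset} := by
    rw [Set.ncard_eq_toFinset_card']; congr 1; ext; simp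
  rw [hs, hpre, Set.ncard_eq_toFinset_card', Nat.card_eq_fintype_card, Nat.card_eq_fintype_card,
    hα]
  ring

lemma QuotientAddGroup.ncard_preimage_mk' {G : Type*} [AddCommGroup G] (Q : AddSubgroup G)
    (A : Set (G ⧸ Q)) : (mk' Q ⁻¹' A).ncard = Nat.card Q * A.ncard := by
  rw [← Nat.card_coe_set_eq, ← Nat.card_coe_set_eq, ← Nat.card_prod]
  exact Nat.card_congr (preimageMkEquivAddSubgroupProdSet Q A)

section TripleSum

variable {ι P M : Type*} [AddCommGroup M]

def tripleSumHom (f : ι → P × P × P) : (P → M) →+ (ι → M) where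
  toFun q j := q (f j).1 + q (f j).2.1 + q (f j).2.2
  map_zero' := by ext; simp
  map_add' q r := by ext; simp only [Pi.add_apply]; abel

@[simp]
lemma tripleSumHom_apply (f : ι → P × P × P) (q : P → M) (j : ι) :
    tripleSumHom f q j = q (f j).1 + q (f j).2.1 + q (f j).2.2 := rfl

lemma tripleSumHom_surjective {f : ι → P × P × P} (h12 : ∀ j, (f j).1 ≠ (f j).2.1)
    (h13 : ∀ j, (f j).1 ≠ (f j).2.2)
    (hdisj : ∀ j k, j ≠ k →
      ({(f j).1, (f j).2.1, (f j).2.2} : Set P) ∩ {(f k).1, (f k).2.1, (f k).2.2} = ∅) :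
    Surjective (tripleSumHom (M := M) f) := by
  have hfirst : Injective fun j => (f j).1 := by
    intro j k h
    by_contra hjk
    exact Set.eq_empty_iff_forall_notMem.1 (hdisj j k hjk) (f j).1 (by simp [h])
  have hrest (j k : ι) : (f k).1 ≠ (f j).2.1 ∧ (f k).1 ≠ (f j).2.2 := by
    obtain rfl | hjk := eq_or_ne k j
    · exact ⟨h12 k, h13 k⟩
    · have := Set.eq_empty_iff_forall_notMem.1 (hdisj j k hjk.symm) (f k).1
      constructor <;> rintro h <;> exact this (by simp [h])
  intro v
  refine ⟨extend (fun j => (f j).1) v 0, funext fun j => ?_⟩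
  rw [tripleSumHom_apply, hfirst.extend_apply,
    extend_apply' _ _ _ fun ⟨k, hk⟩ => (hrest j k).1 hk,
    extend_apply' _ _ _ fun ⟨k, hk⟩ => (hrest j k).2 hk]
  simp

end TripleSum

section Representatives

variable {G : Type*} [AddCommGroup G] {Q : AddSubgroup G}

noncomputable def shiftedRep (q : G ⧸ Q → Q) (p : G ⧸ Q) : G := p.out + q p

@[simp]
lemma mk_shiftedRep (q : G ⧸ Q → Q) (p : G ⧸ Q) : ((shiftedRep q p : G) : G ⧸ Q) = p := by
  simp [shiftedRep]

lemma shiftedRep_add_add_eq_iff (q : G ⧸ Q → Q) (a b c : G ⧸ Q) (x : G) :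
    shiftedRep q a + shiftedRep q b + shiftedRep q c = x ↔
      ((q a + q b + q c : Q) : G) = x - (a.out + b.out + c.out) := by
  rw [eq_sub_iff_add_eq]
  simp only [shiftedRep, AddSubgroup.coe_add]
  constructor <;> intro h <;> rw [← h] <;> abel

lemma ncard_setOf_forall_shiftedRep_ne [Finite G] {J : ℕ} (x : G)
    (f : Fin J → (G ⧸ Q) × (G ⧸ Q) × (G ⧸ Q))
    (hsum : ∀ j, (f j).1 + (f j).2.1 + (f j).2.2 = QuotientAddGroup.mk' Q x)
    (h12 : ∀ j, (f j).1 ≠ (f j).2.1) (h13 : ∀ j, (f j).1 ≠ (f j).2.2)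
    (hdisj : ∀ j k, j ≠ k → ({(f j).1, (f j).2.1, (f j).2.2} : Set (G ⧸ Q)) ∩
      {(f k).1, (f k).2.1, (f k).2.2} = ∅) :
    ({q : G ⧸ Q → Q | ∀ j,
      shiftedRep q (f j).1 + shiftedRep q (f j).2.1 + shiftedRep q (f j).2.2 ≠ x}.ncard : ℝ) =
        (1 - 1 / (Nat.card Q : ℝ)) ^ J * Nat.card (G ⧸ Q → Q) := by
  have hdefect (j : Fin J) :
      ∃ t : Q, (t : G) = x - ((f j).1.out + (f j).2.1.out + (f j).2.2.out) := by
    refine ⟨⟨_, (QuotientAddGroup.eq_zero_iff _).1 ?_⟩, rfl⟩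
    simp [hsum j]
  choose t ht using hdefect
  have hset : {q : G ⧸ Q → Q | ∀ j,
      shiftedRep q (f j).1 + shiftedRep q (f j).2.1 + shiftedRep q (f j).2.2 ≠ x} =
      tripleSumHom f ⁻¹' {v | ∀ j, v j ≠ t j} := by
    ext q
    simp only [Set.mem_ofPred_eq, Set.mem_preimage, tripleSumHom_apply, ne_eq,
      shiftedRep_add_add_eq_iff, ← ht, SetLike.coe_eq_coe]
  have hcount := (tripleSumHom (M := Q) f).ncard_preimage_mul_card
    (tripleSumHom_surjective h12 h13 hdisj) {v | ∀ j, v j ≠ t j}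
  rw [ncard_setOf_forall_ne, Nat.card_fun, Nat.card_eq_fintype_card (α := Fin J),
    Fintype.card_fin, ← hset] at hcount
  have hcountR := congrArg (Nat.cast : ℕ → ℝ) hcount
  push_cast [Nat.cast_sub (Nat.one_le_iff_ne_zero.2 Nat.card_pos.ne')] at hcountR
  have hQ : (0 : ℝ) < Nat.card Q := by exact_mod_cast Nat.card_pos
  rw [one_sub_div hQ.ne', div_pow, div_mul_eq_mul_div, eq_div_iff (pow_pos hQ J).ne', hcountR]

end Representatives

open QuotientAddGroup in
lemma exists_forall_shiftedRep_add_add_eq {G : Type*} [AddCommGroup G] [Finite G]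
    {Q : AddSubgroup G} {A : Set (G ⧸ Q)} {J : ℕ}
    (f : G ⧸ Q → Fin J → (G ⧸ Q) × (G ⧸ Q) × (G ⧸ Q))
    (hsum : ∀ p ∉ A, ∀ j, (f p j).1 + (f p j).2.1 + (f p j).2.2 = p)
    (h12 : ∀ p ∉ A, ∀ j, (f p j).1 ≠ (f p j).2.1) (h13 : ∀ p ∉ A, ∀ j, (f p j).1 ≠ (f p j).2.2)
    (hdisj : ∀ p ∉ A, ∀ j k, j ≠ k → ({(f p j).1, (f p j).2.1, (f p j).2.2} : Set (G ⧸ Q)) ∩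
      {(f p k).1, (f p k).2.1, (f p k).2.2} = ∅)
    (hprob : ((Nat.card G : ℝ) - Nat.card Q * A.ncard) * (1 - 1 / (Nat.card Q : ℝ)) ^ J < 1) :
    ∃ q : G ⧸ Q → Q, ∀ x : G, mk' Q x ∉ A → ∃ j, shiftedRep q (f (mk' Q x) j).1 +
      shiftedRep q (f (mk' Q x) j).2.1 + shiftedRep q (f (mk' Q x) j).2.2 = x := by
  set bad := (Set.toFinite (mk' Q ⁻¹' A)ᶜ).toFinset
  have hbad : (#bad : ℝ) = Nat.card G - Nat.card Q * A.ncard := by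
    have h := Set.ncard_compl_add_ncard (mk' Q ⁻¹' A)
    rw [ncard_preimage_mk'] at h
    rw [← Set.ncard_eq_toFinset_card, eq_sub_iff_add_eq]
    exact_mod_cast h
  have hmem {x : G} : x ∈ bad ↔ mk' Q x ∉ A := Set.Finite.mem_toFinset _
  let fails (x : G) : Set (G ⧸ Q → Q) := {q | ∀ j, shiftedRep q (f (mk' Q x) j).1 +
    shiftedRep q (f (mk' Q x) j).2.1 + shiftedRep q (f (mk' Q x) j).2.2 ≠ x}
  have hfew : ∑ x ∈ bad, (fails x).ncard < Nat.card (G ⧸ Q → Q) := by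
    have hΩ : (0 : ℝ) < Nat.card (G ⧸ Q → Q) := by exact_mod_cast Nat.card_pos
    suffices (∑ x ∈ bad, ((fails x).ncard : ℝ)) < Nat.card (G ⧸ Q → Q) by exact_mod_cast this
    rw [sum_congr rfl fun x hx => ncard_setOf_forall_shiftedRep_ne x _ (hsum _ (hmem.1 hx))
      (h12 _ (hmem.1 hx)) (h13 _ (hmem.1 hx)) (hdisj _ (hmem.1 hx)),
      sum_const, nsmul_eq_mul, ← mul_assoc, hbad]
    nlinarith
  obtain ⟨q, hq⟩ := exists_forall_notMem_of_sum_ncard_lt bad fails hfew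
  exact ⟨q, fun x hx => by simpa [fails] using hq x (hmem.2 hx)⟩

open QuotientAddGroup in
theorem exists_good_representatives_of_finite {G : Type*} [AddCommGroup G] [Finite G]
    (Q : AddSubgroup G) (A : Set (G ⧸ Q)) (J : ℕ)
    (hcover : ∀ p ∉ A, ∃ f : Fin J → (G ⧸ Q) × (G ⧸ Q) × (G ⧸ Q),
        (∀ j, (f j).1 ∈ A ∧ (f j).2.1 ∈ A ∧ (f j).2.2 ∈ A ∧
          (f j).1 ≠ (f j).2.1 ∧ (f j).1 ≠ (f j).2.2 ∧ (f j).2.1 ≠ (f j).2.2 ∧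
          (f j).1 + (f j).2.1 + (f j).2.2 = p) ∧
        (∀ j k, j ≠ k →
          ({(f j).1, (f j).2.1, (f j).2.2} : Set (G ⧸ Q)) ∩ {(f k).1, (f k).2.1, (f k).2.2} = ∅))
    (hprob : ((Nat.card G : ℝ) - Nat.card Q * A.ncard) * (1 - 1 / (Nat.card Q : ℝ)) ^ J < 1) :
    ∃ B : Set G, Set.InjOn (mk' Q) B ∧ mk' Q '' B = A ∧
      ∀ x : G, mk' Q x ∉ A →
        ∃ b₁ ∈ B, ∃ b₂ ∈ B, ∃ b₃ ∈ B, b₁ ≠ b₂ ∧ b₁ ≠ b₃ ∧ b₂ ≠ b₃ ∧ b₁ + b₂ + b₃ = x := by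
  choose! f hf hdisj using hcover
  obtain ⟨q, hq⟩ := exists_forall_shiftedRep_add_add_eq f (fun p hp j => (hf p hp j).2.2.2.2.2.2)
    (fun p hp j => (hf p hp j).2.2.2.1) (fun p hp j => (hf p hp j).2.2.2.2.1) hdisj hprob
  refine ⟨shiftedRep q '' A, ?_, by simp [Set.image_image], fun x hx => ?_⟩
  · rintro _ ⟨a, -, rfl⟩ _ ⟨b, -, rfl⟩ h
    simpa using congrArg (shiftedRep q) (by simpa using h)
  · obtain ⟨j, hj⟩ := hq x hx
    obtain ⟨h1, h2, h3, h12, h13, h23, -⟩ := hf _ hx j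
    refine ⟨_, Set.mem_image_of_mem _ h1, _, Set.mem_image_of_mem _ h2, _,
      Set.mem_image_of_mem _ h3, fun h => h12 ?_, fun h => h13 ?_, fun h => h23 ?_, hj⟩ <;>
    simpa using congrArg (mk' Q) h

theorem exists_good_representatives_general (n m : ℕ) (Q : AddSubgroup (Fin n → ZMod 2))
    (hQ : Nat.card ((Fin n → ZMod 2) ⧸ Q) = 2 ^ m)
    (A : Set ((Fin n → ZMod 2) ⧸ Q)) (J : ℕ)
    (hcover : ∀ p ∉ A,
      ∃ f : Fin J → ((Fin n → ZMod 2) ⧸ Q) × ((Fin n → ZMod 2) ⧸ Q) × ((Fin n → ZMod 2) ⧸ Q),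
        (∀ j, (f j).1 ∈ A ∧ (f j).2.1 ∈ A ∧ (f j).2.2 ∈ A ∧
          (f j).1 ≠ (f j).2.1 ∧ (f j).1 ≠ (f j).2.2 ∧ (f j).2.1 ≠ (f j).2.2 ∧
          (f j).1 + (f j).2.1 + (f j).2.2 = p) ∧
        (∀ j k, j ≠ k →
          ({(f j).1, (f j).2.1, (f j).2.2} : Set ((Fin n → ZMod 2) ⧸ Q)) ∩
            {(f k).1, (f k).2.1, (f k).2.2} = ∅))
    (hprob : ((2 : ℝ) ^ n - (Nat.card Q : ℝ) * A.ncard) *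
        (1 - (2 : ℝ) ^ ((m : ℤ) - (n : ℤ))) ^ J < 1) :
    ∃ B : Set (Fin n → ZMod 2),
      Set.InjOn (QuotientAddGroup.mk' Q) B ∧
      (QuotientAddGroup.mk' Q) '' B = A ∧
      ∀ x : Fin n → ZMod 2, (QuotientAddGroup.mk' Q) x ∉ A →
        ∃ b₁ ∈ B, ∃ b₂ ∈ B, ∃ b₃ ∈ B,
          b₁ ≠ b₂ ∧ b₁ ≠ b₃ ∧ b₂ ≠ b₃ ∧ b₁ + b₂ + b₃ = x := by
  have hG : Nat.card (Fin n → ZMod 2) = 2 ^ n := by simp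
  have hindex : (2 : ℝ) ^ ((m : ℤ) - (n : ℤ)) = 1 / Nat.card Q := by
    have h := AddSubgroup.card_eq_card_quotient_mul_card_addSubgroup Q
    rw [hG, hQ] at h
    rw [zpow_sub₀ two_ne_zero, zpow_natCast, zpow_natCast,
      div_eq_div_iff (by positivity) (Nat.cast_ne_zero.2 Nat.card_pos.ne'), one_mul]
    exact_mod_cast h.symm
  refine exists_good_representatives_of_finite Q A J hcover ?_
  rwa [hG, Nat.cast_pow, Nat.cast_ofNat, ← hindex]

/-- Let `G = (ℤ/2ℤ)^n`, `Q ≤ G` of index `2^m`, `π : G → G/Q` the quotient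
map, and `A ⊆ G/Q` a Sidon set such that every `p ∉ A` is covered by at least `J ≥ 1`
pairwise disjoint unordered triples of pairwise distinct elements of `A`.  If
`(2^n − |Q|·|A|)·(1 − 2^{m−n})^J < 1`, then there is a set `B` of coset representatives of
`A` (i.e. `π` is injective on `B` and `π(B) = A`) covering every `x` with `π(x) ∉ A`. -/
theorem exists_good_representatives (n m : ℕ) (Q : AddSubgroup (Fin n → ZMod 2))
    (hQ : Nat.card ((Fin n → ZMod 2) ⧸ Q) = 2 ^ m)
    (A : Set ((Fin n → ZMod 2) ⧸ Q)) (hA : IsSidon A) (J : ℕ) (hJ : 1 ≤ J)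
    (hcover : ∀ p ∉ A,
      ∃ f : Fin J → ((Fin n → ZMod 2) ⧸ Q) × ((Fin n → ZMod 2) ⧸ Q) × ((Fin n → ZMod 2) ⧸ Q),
        (∀ j, (f j).1 ∈ A ∧ (f j).2.1 ∈ A ∧ (f j).2.2 ∈ A ∧
          (f j).1 ≠ (f j).2.1 ∧ (f j).1 ≠ (f j).2.2 ∧ (f j).2.1 ≠ (f j).2.2 ∧
          (f j).1 + (f j).2.1 + (f j).2.2 = p) ∧
        (∀ j k, j ≠ k →
          ({(f j).1, (f j).2.1, (f j).2.2} : Set ((Fin n → ZMod 2) ⧸ Q)) ∩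
            {(f k).1, (f k).2.1, (f k).2.2} = ∅))
    (hprob : ((2 : ℝ) ^ n - (Nat.card Q : ℝ) * A.ncard) *
        (1 - (2 : ℝ) ^ ((m : ℤ) - (n : ℤ))) ^ J < 1) :
    ∃ B : Set (Fin n → ZMod 2),
      Set.InjOn (QuotientAddGroup.mk' Q) B ∧
      (QuotientAddGroup.mk' Q) '' B = A ∧
      ∀ x : Fin n → ZMod 2, (QuotientAddGroup.mk' Q) x ∉ A →
        ∃ b₁ ∈ B, ∃ b₂ ∈ B, ∃ b₃ ∈ B,
          b₁ ≠ b₂ ∧ b₁ ≠ b₃ ∧ b₂ ≠ b₃ ∧ b₁ + b₂ + b₃ = x :=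
  exists_good_representatives_general n m Q hQ A J hcover hprob
end
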